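/- Let ŝ and ŝ_⊥ be orthonormal vectors in C^L, let a, b ∈ C with |a|² + |b|² = 1, set s = a·ŝ + b·ŝ_⊥, and let 0 ≤ μ₁ ≤ μ₂. Consider maximizing |⟨f, s⟩|² over f ∈ C^L subject to |⟨f, ŝ⟩|² ≤ μ₁ and ‖f‖² ≤ μ₂. If μ₁ ≥ |a|²·μ₂ the maximum value is μ₂; if μ₁ < |a|²·μ₂ the maximum value is (|a|√μ₁ + |b|√(μ₂ - μ₁))². -/

import Mathlib

/-!
Write `α = ⟪f, ŝ⟫` and `β = ⟪f, ŝ_⊥⟫`, so that `⟪f, s⟫ = a α + b β` and, by Bessel,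
`|α|² + |β|² ≤ ‖f‖²`. When maximum-ratio transmission `f = √μ₂ s` meets the interference
constraint, Cauchy–Schwarz shows it is optimal. Otherwise the problem reduces to maximizing
`|a| t + |b| u` over `t ≤ √μ₁`, `t² + u² ≤ μ₂`; the condition `μ₁ ≤ |a|² μ₂` says that
`(|a|, |b|)` lies in the normal cone of this region at the corner `(√μ₁, √(μ₂ - μ₁))`, which is
therefore optimal, and it is attained by aligning the phases of the coefficients of `f` with
those of `a` and `b`.
-/

open ComplexConjugate

lemma mul_add_mul_le_of_sq_add_sq_le {A B t u w v : ℝ} (hA : 0 ≤ A) (hB : 0 ≤ B) (hv : 0 ≤ v)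
    (htw : t ≤ w) (htu : t ^ 2 + u ^ 2 ≤ w ^ 2 + v ^ 2) (hBA : B * w ≤ A * v) :
    A * t + B * u ≤ A * w + B * v := by
  rcases le_or_gt u v with huv | hvu
  · nlinarith
  · have h1 : B * (u ^ 2 - v ^ 2) ≤ B * ((w - t) * (w + t)) := by nlinarith
    have h2 : B * (w + t) ≤ A * (u + v) := by nlinarith
    nlinarith [mul_nonneg hA (sub_nonneg.2 htw)]

section RCLike

variable {𝕜 : Type*} [RCLike 𝕜]

lemma norm_ofReal_mul_div_norm_le {r : ℝ} (hr : 0 ≤ r) (c : 𝕜) :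
    ‖(r : 𝕜) * (c / ‖c‖)‖ ≤ r := by
  rw [norm_mul, RCLike.norm_ofReal, abs_of_nonneg hr, norm_div, RCLike.norm_ofReal, abs_norm]
  exact mul_le_of_le_one_right hr (div_self_le_one _)

lemma conj_ofReal_mul_div_norm_mul (r : ℝ) (c : 𝕜) :
    conj ((r : 𝕜) * (c / ‖c‖)) * c = ((‖c‖ * r : ℝ) : 𝕜) := by
  rcases eq_or_ne c 0 with rfl | hc
  · simp
  · have hc' : (‖c‖ : 𝕜) ≠ 0 := RCLike.ofReal_ne_zero.2 (norm_ne_zero_iff.2 hc)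
    rw [map_mul, map_div₀, RCLike.conj_ofReal, RCLike.conj_ofReal, mul_div_assoc',
      div_mul_eq_mul_div, mul_assoc, RCLike.conj_mul]
    push_cast
    field_simp

end RCLike

section Orthonormal

variable {𝕜 E : Type*} [RCLike 𝕜] [NormedAddCommGroup E] [InnerProductSpace 𝕜 E]
  {u v : E}

lemma orthonormal_pair (hu : ‖u‖ = 1) (hv : ‖v‖ = 1) (huv : inner 𝕜 u v = 0) :
    Orthonormal 𝕜 ![u, v] := by
  rw [orthonormal_iff_ite]
  intro i j
  fin_cases i <;> fin_cases j <;> simp [hu, hv, huv, ← inner_conj_symm v u]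

lemma inner_smul_add_smul (hu : ‖u‖ = 1) (hv : ‖v‖ = 1) (huv : inner 𝕜 u v = 0)
    (c d a b : 𝕜) :
    inner 𝕜 (c • u + d • v) (a • u + b • v) = conj c * a + conj d * b := by
  have hvu : inner 𝕜 v u = 0 := by rw [← inner_conj_symm, huv, map_zero]
  simp [inner_add_left, inner_add_right, inner_smul_left, inner_smul_right,
    inner_self_eq_norm_sq_to_K, hu, hv, huv, hvu, mul_comm]

lemma norm_smul_add_smul_sq (hu : ‖u‖ = 1) (hv : ‖v‖ = 1) (huv : inner 𝕜 u v = 0)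
    (c d : 𝕜) : ‖c • u + d • v‖ ^ 2 = ‖c‖ ^ 2 + ‖d‖ ^ 2 := by
  have h := inner_self_eq_norm_sq_to_K (𝕜 := 𝕜) (c • u + d • v)
  rw [inner_smul_add_smul hu hv huv, RCLike.conj_mul, RCLike.conj_mul] at h
  exact_mod_cast h.symm

lemma norm_inner_sq_add_norm_inner_sq_le (hu : ‖u‖ = 1) (hv : ‖v‖ = 1)
    (huv : inner 𝕜 u v = 0) (f : E) :
    ‖inner 𝕜 f u‖ ^ 2 + ‖inner 𝕜 f v‖ ^ 2 ≤ ‖f‖ ^ 2 := by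
  have h := (orthonormal_pair hu hv huv).sum_inner_products_le (s := Finset.univ) f
  simpa [Fin.sum_univ_two, norm_inner_symm f] using h

end Orthonormal

section Beamforming

variable (𝕜 : Type*) {E : Type*} [RCLike 𝕜] [NormedAddCommGroup E] [InnerProductSpace 𝕜 E]

def achievableSNR (u s : E) (μ₁ μ₂ : ℝ) : Set ℝ :=
  {x | ∃ f : E, ‖inner 𝕜 f u‖ ^ 2 ≤ μ₁ ∧ ‖f‖ ^ 2 ≤ μ₂ ∧ x = ‖inner 𝕜 f s‖ ^ 2}

variable {𝕜} {u v : E} {a b : 𝕜} {μ₁ μ₂ : ℝ}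

theorem isGreatest_achievableSNR_of_norm_sq_mul_le (hu : ‖u‖ = 1) (hv : ‖v‖ = 1)
    (huv : inner 𝕜 u v = 0) (hab : ‖a‖ ^ 2 + ‖b‖ ^ 2 = 1) (hμ₂ : 0 ≤ μ₂)
    (h : ‖a‖ ^ 2 * μ₂ ≤ μ₁) :
    IsGreatest (achievableSNR 𝕜 u (a • u + b • v) μ₁ μ₂) μ₂ := by
  set s := a • u + b • v
  have hs : ‖s‖ = 1 := by
    rw [← pow_eq_one_iff_of_nonneg (norm_nonneg s) two_ne_zero,
      norm_smul_add_smul_sq hu hv huv, hab]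
  have hsu : inner 𝕜 s u = conj a := by simpa using inner_smul_add_smul hu hv huv a b 1 0
  have hμ : ‖(√μ₂ : 𝕜)‖ ^ 2 = μ₂ := by
    rw [RCLike.norm_ofReal, sq_abs, Real.sq_sqrt hμ₂]
  refine ⟨⟨(√μ₂ : 𝕜) • s, ?_, ?_, ?_⟩, ?_⟩
  · rw [inner_smul_left, hsu, norm_mul, RCLike.norm_conj, RCLike.norm_conj, mul_pow, hμ]
    linarith
  · rw [norm_smul, hs, mul_one, hμ]
  · rw [inner_smul_left, inner_self_eq_norm_sq_to_K, hs]
    simp only [RCLike.ofReal_one, one_pow, mul_one, RCLike.norm_conj, hμ]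
  · rintro x ⟨f, -, hf, rfl⟩
    calc ‖inner 𝕜 f s‖ ^ 2 ≤ ‖f‖ ^ 2 := by
          gcongr
          simpa [hs] using norm_inner_le_norm (𝕜 := 𝕜) f s
      _ ≤ μ₂ := hf

theorem isGreatest_achievableSNR_of_le_norm_sq_mul (hu : ‖u‖ = 1) (hv : ‖v‖ = 1)
    (huv : inner 𝕜 u v = 0) (hab : ‖a‖ ^ 2 + ‖b‖ ^ 2 = 1) (hμ₁ : 0 ≤ μ₁) (hμ₁₂ : μ₁ ≤ μ₂)
    (h : μ₁ ≤ ‖a‖ ^ 2 * μ₂) :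
    IsGreatest (achievableSNR 𝕜 u (a • u + b • v) μ₁ μ₂)
      ((‖a‖ * √μ₁ + ‖b‖ * √(μ₂ - μ₁)) ^ 2) := by
  have hμ : 0 ≤ μ₂ - μ₁ := sub_nonneg.2 hμ₁₂
  refine ⟨?_, ?_⟩
  · -- For `b = 0` the junk value `0 / 0 = 0` makes `c₂ = 0`, as the paper intends.
    set c₁ : 𝕜 := (√μ₁ : 𝕜) * (a / ‖a‖)
    set c₂ : 𝕜 := (√(μ₂ - μ₁) : 𝕜) * (b / ‖b‖)
    have hc₁ : ‖c₁‖ ^ 2 ≤ μ₁ :=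
      (pow_le_pow_left₀ (norm_nonneg _)
        (norm_ofReal_mul_div_norm_le (Real.sqrt_nonneg _) a) 2).trans_eq (Real.sq_sqrt hμ₁)
    have hc₂ : ‖c₂‖ ^ 2 ≤ μ₂ - μ₁ :=
      (pow_le_pow_left₀ (norm_nonneg _)
        (norm_ofReal_mul_div_norm_le (Real.sqrt_nonneg _) b) 2).trans_eq (Real.sq_sqrt hμ)
    refine ⟨c₁ • u + c₂ • v, ?_, ?_, ?_⟩
    · have : inner 𝕜 (c₁ • u + c₂ • v) u = conj c₁ := by
        simpa using inner_smul_add_smul hu hv huv c₁ c₂ 1 0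
      rwa [this, RCLike.norm_conj]
    · rw [norm_smul_add_smul_sq hu hv huv]
      linarith
    · rw [inner_smul_add_smul hu hv huv, conj_ofReal_mul_div_norm_mul,
        conj_ofReal_mul_div_norm_mul, ← RCLike.ofReal_add, RCLike.norm_ofReal,
        sq_abs]
  · rintro x ⟨f, hfu, hf, rfl⟩
    have hbessel := norm_inner_sq_add_norm_inner_sq_le hu hv huv f
    have hba : ‖b‖ * √μ₁ ≤ ‖a‖ * √(μ₂ - μ₁) := by
      rw [← pow_le_pow_iff_left₀ (by positivity) (by positivity) two_ne_zero, mul_pow, mul_pow,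
        Real.sq_sqrt hμ₁, Real.sq_sqrt hμ]
      nlinarith
    have hnorm : ‖inner 𝕜 f (a • u + b • v)‖ ≤ ‖a‖ * √μ₁ + ‖b‖ * √(μ₂ - μ₁) :=
      calc ‖inner 𝕜 f (a • u + b • v)‖ = ‖a * inner 𝕜 f u + b * inner 𝕜 f v‖ := by
            rw [inner_add_right, inner_smul_right, inner_smul_right]
        _ ≤ ‖a‖ * ‖inner 𝕜 f u‖ + ‖b‖ * ‖inner 𝕜 f v‖ := by
            simpa only [norm_mul] using norm_add_le (a * inner 𝕜 f u) (b * inner 𝕜 f v)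
        _ ≤ ‖a‖ * √μ₁ + ‖b‖ * √(μ₂ - μ₁) := by
            refine mul_add_mul_le_of_sq_add_sq_le (norm_nonneg a) (norm_nonneg b)
              (Real.sqrt_nonneg _) (Real.le_sqrt_of_sq_le hfu) ?_ hba
            rw [Real.sq_sqrt hμ₁, Real.sq_sqrt hμ]
            linarith
    exact pow_le_pow_left₀ (norm_nonneg _) hnorm 2

end Beamforming

theorem nocb_optimal_value_general
    (L : ℕ)
    (shat sperp : EuclideanSpace ℂ (Fin L))
    (hshat : ‖shat‖ = 1) (hsperp : ‖sperp‖ = 1) (horth : (inner ℂ shat sperp : ℂ) = 0)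
    (a b : ℂ) (hab : ‖a‖ ^ 2 + ‖b‖ ^ 2 = 1)
    (s : EuclideanSpace ℂ (Fin L)) (hs : s = a • shat + b • sperp)
    (μ₁ μ₂ : ℝ) (hμ₁ : 0 ≤ μ₁) (hμ₁₂ : μ₁ ≤ μ₂) :
    (‖a‖ ^ 2 * μ₂ ≤ μ₁ →
      IsGreatest {x : ℝ | ∃ f : EuclideanSpace ℂ (Fin L),
        ‖(inner ℂ f shat : ℂ)‖ ^ 2 ≤ μ₁ ∧ ‖f‖ ^ 2 ≤ μ₂ ∧ x = ‖(inner ℂ f s : ℂ)‖ ^ 2} μ₂) ∧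
    (μ₁ < ‖a‖ ^ 2 * μ₂ →
      IsGreatest {x : ℝ | ∃ f : EuclideanSpace ℂ (Fin L),
        ‖(inner ℂ f shat : ℂ)‖ ^ 2 ≤ μ₁ ∧ ‖f‖ ^ 2 ≤ μ₂ ∧ x = ‖(inner ℂ f s : ℂ)‖ ^ 2}
        ((‖a‖ * Real.sqrt μ₁ + ‖b‖ * Real.sqrt (μ₂ - μ₁)) ^ 2)) := by
  subst hs
  exact ⟨isGreatest_achievableSNR_of_norm_sq_mul_le hshat hsperp horth hab (hμ₁.trans hμ₁₂),
    fun h => isGreatest_achievableSNR_of_le_norm_sq_mul hshat hsperp horth hab hμ₁ hμ₁₂ h.le⟩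

/-- Non-orthogonal cognitive beamforming: maximize `|⟨f,s⟩|²` subject to
`|⟨f,shat⟩|² ≤ μ₁` and `‖f‖² ≤ μ₂`, where `s = a·shat + b·sperp` with `shat ⟂ sperp`
orthonormal and `|a|² + |b|² = 1`.  The maximum is `μ₂` when `μ₁ ≥ |a|²μ₂`, and
`(|a|√μ₁ + |b|√(μ₂-μ₁))²` when `μ₁ < |a|²μ₂`. -/
theorem nocb_optimal_value
    (L : ℕ) (hL : 2 ≤ L)
    (shat sperp : EuclideanSpace ℂ (Fin L))
    (hshat : ‖shat‖ = 1) (hsperp : ‖sperp‖ = 1) (horth : (inner ℂ shat sperp : ℂ) = 0)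
    (a b : ℂ) (hab : ‖a‖ ^ 2 + ‖b‖ ^ 2 = 1)
    (s : EuclideanSpace ℂ (Fin L)) (hs : s = a • shat + b • sperp)
    (μ₁ μ₂ : ℝ) (hμ₁ : 0 ≤ μ₁) (hμ₁₂ : μ₁ ≤ μ₂) :
    (‖a‖ ^ 2 * μ₂ ≤ μ₁ →
      IsGreatest {x : ℝ | ∃ f : EuclideanSpace ℂ (Fin L),
        ‖(inner ℂ f shat : ℂ)‖ ^ 2 ≤ μ₁ ∧ ‖f‖ ^ 2 ≤ μ₂ ∧ x = ‖(inner ℂ f s : ℂ)‖ ^ 2} μ₂) ∧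
    (μ₁ < ‖a‖ ^ 2 * μ₂ →
      IsGreatest {x : ℝ | ∃ f : EuclideanSpace ℂ (Fin L),
        ‖(inner ℂ f shat : ℂ)‖ ^ 2 ≤ μ₁ ∧ ‖f‖ ^ 2 ≤ μ₂ ∧ x = ‖(inner ℂ f s : ℂ)‖ ^ 2}
        ((‖a‖ * Real.sqrt μ₁ + ‖b‖ * Real.sqrt (μ₂ - μ₁)) ^ 2)) :=
  nocb_optimal_value_general L shat sperp hshat hsperp horth a b hab s hs μ₁ μ₂ hμ₁ hμ₁₂
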